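/- (Theorem 2, part 2, genericity made precise) In a finite two-player multistage game, suppose that for every player i and every k ≥ 1 the survivor set Σᵏ_{θ_{ik}} of the dynamic Δ^κ-rationalization procedure contains exactly one element. Then Λᵏ_{θ_{ik}} = Σᵏ_{θ_{ik}} for every player i and every k ∈ ℕ₀, and consequently Λ^∞_{θ_i} = Σ^∞_{θ_i} for every type θ_i: the DCH solution coincides with dynamic Δ^κ-rationalizability. -/

import Mathlib

/-!
A level-`k` type (`k ≥ 1`) gives every level-0 strategy positive weight at the root (DK2, and DK3
with `f > 0`), so by the chain rule its belief at every history is carried by the support of its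
root belief. Hence a strategy surviving round `k` of the Δ^κ-procedure survives every later round:
by induction on `k`, the opponent types in the root support have levels below `k` and survive
forever. Consequently both `Λᵏ_{θ_{ik}}` and `Σᵏ_{θ_{ik}}` consist of the strategies that are
sequentially rational for some CPS in `Δ^{θ_{ik}}` whose root belief is carried by the surviving
opponent types of lower level. Under genericity those types are singletons, so the extra DCH
requirements on the root belief (full support and equal weights within each level) hold
automatically: `f^k` gives each level positive mass and DK2 makes level 0 uniform.
-/

open scoped BigOperators
open Classical

noncomputable section

/-- A two-player multistage game: feasibility correspondences assigning to each history
(a finite sequence of action profiles, most recent first; `[]` is the root `∅`) the set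
of feasible actions of each player. -/
structure MSGame (A B : Type*) where
  feas1 : List (A × B) → Finset A
  feas2 : List (A × B) → Finset B

namespace MSGame

variable {A B : Type*}

/-- A history is terminal iff no player has a feasible action there. -/
def terminal (G : MSGame A B) (h : List (A × B)) : Prop :=
  G.feas1 h = ∅ ∧ G.feas2 h = ∅

/-- Feasible histories: the root is feasible, and a profile may be appended to a
feasible non-terminal history iff each component is feasible for its player. -/
def feasible (G : MSGame A B) : List (A × B) → Prop
  | [] => True
  | p :: h => feasible G h ∧ ¬G.terminal h ∧ p.1 ∈ G.feas1 h ∧ p.2 ∈ G.feas2 h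

/-- Well-formedness: the "wait" convention (an inactive player has exactly her waiting
move, so one feasibility set is empty iff the other is), finitely many feasible
histories, and a nontrivial root. -/
def WellFormed (G : MSGame A B) : Prop :=
  (∀ h : List (A × B), (G.feas1 h = ∅ ↔ G.feas2 h = ∅)) ∧
  {h : List (A × B) | G.feasible h}.Finite ∧ ¬G.terminal []

/-- The set `H` of non-terminal feasible histories, as a type. -/
def Hist (G : MSGame A B) : Type _ := {h : List (A × B) // G.feasible h ∧ ¬G.terminal h}

end MSGame

/-- A strategy of player 1: a feasible action at every non-terminal feasible history. -/
structure Strat1 {A B : Type*} (G : MSGame A B) where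
  act : G.Hist → A
  mem : ∀ h : G.Hist, act h ∈ G.feas1 h.1

/-- A strategy of player 2. -/
structure Strat2 {A B : Type*} (G : MSGame A B) where
  act : G.Hist → B
  mem : ∀ h : G.Hist, act h ∈ G.feas2 h.1

/-- `s ∈ S₁(h)`: player 1's strategy `s` is consistent with reaching history `h`
(it prescribes, at every proper prefix of `h`, the action played in `h`). -/
def consistent1 {A B : Type*} (G : MSGame A B) (s : Strat1 G) (h : List (A × B)) : Prop :=
  ∀ (h' : G.Hist) (p : A × B) (l : List (A × B)), h = l ++ p :: h'.1 → s.act h' = p.1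

/-- `s ∈ S₂(h)`. -/
def consistent2 {A B : Type*} (G : MSGame A B) (s : Strat2 G) (h : List (A × B)) : Prop :=
  ∀ (h' : G.Hist) (p : A × B) (l : List (A × B)), h = l ++ p :: h'.1 → s.act h' = p.2

/-- Fuelled play function. -/
def playAux {A B : Type*} (G : MSGame A B) (s1 : Strat1 G) (s2 : Strat2 G) :
    ℕ → List (A × B) → List (A × B)
  | 0, h => h
  | n + 1, h =>
      if hf : G.feasible h ∧ ¬G.terminal h then
        playAux G s1 s2 n ((s1.act ⟨h, hf⟩, s2.act ⟨h, hf⟩) :: h)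
      else h

/-- The terminal history `ζ(s₁,s₂)` induced by a strategy profile (in a well-formed
game the fuel suffices to reach a terminal history). -/
def play {A B : Type*} (G : MSGame A B) (s1 : Strat1 G) (s2 : Strat2 G) : List (A × B) :=
  playAux G s1 s2 ({h : List (A × B) | G.feasible h}.ncard + 1) []

/-- Player 1's payoff `U₁(θ, s)`: the level-0 type gets constant 0, other levels get
`v₁` at the induced terminal history. -/
def payU1 {A B : Type*} (G : MSGame A B) (v1 : List (A × B) → ℝ)
    (θ : ℕ) (s1 : Strat1 G) (s2 : Strat2 G) : ℝ :=
  if θ = 0 then 0 else v1 (play G s1 s2)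

/-- Player 2's payoff `U₂(θ, s)`. -/
def payU2 {A B : Type*} (G : MSGame A B) (v2 : List (A × B) → ℝ)
    (θ : ℕ) (s1 : Strat1 G) (s2 : Strat2 G) : ℝ :=
  if θ = 0 then 0 else v2 (play G s1 s2)

/-- A conditional probability system of player 1 over (opponent level, opponent
strategy) pairs: at each `h ∈ H` a probability distribution concentrated on
`Θ × S₂(h)`, satisfying the chain rule. -/
structure CPS2 {A B : Type*} (G : MSGame A B) where
  p : G.Hist → ℕ × Strat2 G → ℝ
  nonneg : ∀ h x, 0 ≤ p h x
  supp : ∀ h x, p h x ≠ 0 → consistent2 G x.2 h.1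
  hasSum_one : ∀ h, HasSum (p h) 1
  chain : ∀ h' h'' : G.Hist, h'.1 <:+ h''.1 → h'.1 ≠ h''.1 →
    ∀ x : ℕ × Strat2 G, consistent2 G x.2 h''.1 →
      p h' x = p h'' x * ∑' y : ℕ × Strat2 G, (if consistent2 G y.2 h''.1 then p h' y else 0)

/-- A conditional probability system of player 2. -/
structure CPS1 {A B : Type*} (G : MSGame A B) where
  p : G.Hist → ℕ × Strat1 G → ℝ
  nonneg : ∀ h x, 0 ≤ p h x
  supp : ∀ h x, p h x ≠ 0 → consistent1 G x.2 h.1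
  hasSum_one : ∀ h, HasSum (p h) 1
  chain : ∀ h' h'' : G.Hist, h'.1 <:+ h''.1 → h'.1 ≠ h''.1 →
    ∀ x : ℕ × Strat1 G, consistent1 G x.2 h''.1 →
      p h' x = p h'' x * ∑' y : ℕ × Strat1 G, (if consistent1 G y.2 h''.1 then p h' y else 0)

/-- Marginal probability of the opponent's level-`t` type at history `h` (player 1's CPS). -/
def margD2 {A B : Type*} {G : MSGame A B} (μ : CPS2 G) (h : G.Hist) (t : ℕ) : ℝ :=
  ∑' s : Strat2 G, μ.p h (t, s)

def margD1 {A B : Type*} {G : MSGame A B} (μ : CPS1 G) (h : G.Hist) (t : ℕ) : ℝ :=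
  ∑' s : Strat1 G, μ.p h (t, s)

/-- `f` normalized to the levels `0, …, k-1` (`f^k` in the paper). -/
def fnorm (f : ℕ → ℝ) (k t : ℕ) : ℝ := f t / ∑ ℓ ∈ Finset.range k, f ℓ

/-- DK1–DK3 (membership in the dynamic `Δ^{θ_{1k}}`); no restriction for `k = 0`. -/
def memDeltaD2 {A B : Type*} (G : MSGame A B) (f : ℕ → ℝ) (k : ℕ) (μ : CPS2 G) : Prop :=
  k ≠ 0 →
    ((∀ (h : G.Hist) (t : ℕ), k ≤ t → margD2 μ h t = 0) ∧
     (∀ h : G.Hist, 0 < margD2 μ h 0 →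
        ∀ s : Strat2 G, consistent2 G s h.1 →
          μ.p h (0, s) / margD2 μ h 0 =
            1 / (({s' : Strat2 G | consistent2 G s' h.1}).ncard : ℝ)) ∧
     (∀ hr : G.feasible [] ∧ ¬G.terminal [],
        ∀ t : ℕ, t < k → margD2 μ ⟨[], hr⟩ t = fnorm f k t))

def memDeltaD1 {A B : Type*} (G : MSGame A B) (f : ℕ → ℝ) (k : ℕ) (μ : CPS1 G) : Prop :=
  k ≠ 0 →
    ((∀ (h : G.Hist) (t : ℕ), k ≤ t → margD1 μ h t = 0) ∧
     (∀ h : G.Hist, 0 < margD1 μ h 0 →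
        ∀ s : Strat1 G, consistent1 G s h.1 →
          μ.p h (0, s) / margD1 μ h 0 =
            1 / (({s' : Strat1 G | consistent1 G s' h.1}).ncard : ℝ)) ∧
     (∀ hr : G.feasible [] ∧ ¬G.terminal [],
        ∀ t : ℕ, t < k → margD1 μ ⟨[], hr⟩ t = fnorm f k t))

/-- Player 1's conditional expected payoff at `h` from strategy `s1`, own level `θ`. -/
def expU1 {A B : Type*} (G : MSGame A B) (v1 : List (A × B) → ℝ)
    (θ : ℕ) (μ : CPS2 G) (h : G.Hist) (s1 : Strat1 G) : ℝ :=
  ∑' x : ℕ × Strat2 G, μ.p h x * payU1 G v1 θ s1 x.2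

def expU2 {A B : Type*} (G : MSGame A B) (v2 : List (A × B) → ℝ)
    (θ : ℕ) (μ : CPS1 G) (h : G.Hist) (s2 : Strat2 G) : ℝ :=
  ∑' x : ℕ × Strat1 G, μ.p h x * payU2 G v2 θ x.2 s2

/-- Sequential rationality of `s1` for the level-`θ` type of player 1 w.r.t. CPS `μ`. -/
def seqRat1 {A B : Type*} (G : MSGame A B) (v1 : List (A × B) → ℝ)
    (θ : ℕ) (μ : CPS2 G) (s1 : Strat1 G) : Prop :=
  ∀ h : G.Hist, consistent1 G s1 h.1 →
    ∀ s1' : Strat1 G, consistent1 G s1' h.1 →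
      expU1 G v1 θ μ h s1' ≤ expU1 G v1 θ μ h s1

def seqRat2 {A B : Type*} (G : MSGame A B) (v2 : List (A × B) → ℝ)
    (θ : ℕ) (μ : CPS1 G) (s2 : Strat2 G) : Prop :=
  ∀ h : G.Hist, consistent2 G s2 h.1 →
    ∀ s2' : Strat2 G, consistent2 G s2' h.1 →
      expU2 G v2 θ μ h s2' ≤ expU2 G v2 θ μ h s2

/-- The dynamic Δ^κ-rationalization procedure (pairs of surviving
(level, strategy) sets for the two players). -/
def SigmaD {A B : Type*} (G : MSGame A B) (v1 v2 : List (A × B) → ℝ) (f : ℕ → ℝ) :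
    ℕ → Set (ℕ × Strat1 G) × Set (ℕ × Strat2 G)
  | 0 => (Set.univ, Set.univ)
  | n + 1 =>
      let P := SigmaD G v1 v2 f n
      ({x | x ∈ P.1 ∧ ∃ μ : CPS2 G, memDeltaD2 G f x.1 μ ∧
          (∀ h : G.Hist, (∃ y : ℕ × Strat2 G, y ∈ P.2 ∧ consistent2 G y.2 h.1) →
            ∑' y : ℕ × Strat2 G, Set.indicator P.2 (μ.p h) y = 1) ∧
          seqRat1 G v1 x.1 μ x.2},
       {x | x ∈ P.2 ∧ ∃ μ : CPS1 G, memDeltaD1 G f x.1 μ ∧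
          (∀ h : G.Hist, (∃ y : ℕ × Strat1 G, y ∈ P.1 ∧ consistent1 G y.2 h.1) →
            ∑' y : ℕ × Strat1 G, Set.indicator P.1 (μ.p h) y = 1) ∧
          seqRat2 G v2 x.1 μ x.2})

/-- The section `Σⁿ_{θ_{1k}}` (a set of strategies of player 1). -/
def SigmaDSec1 {A B : Type*} (G : MSGame A B) (v1 v2 : List (A × B) → ℝ) (f : ℕ → ℝ)
    (n k : ℕ) : Set (Strat1 G) :=
  {s | (k, s) ∈ (SigmaD G v1 v2 f n).1}

def SigmaDSec2 {A B : Type*} (G : MSGame A B) (v1 v2 : List (A × B) → ℝ) (f : ℕ → ℝ)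
    (n k : ℕ) : Set (Strat2 G) :=
  {s | (k, s) ∈ (SigmaD G v1 v2 f n).2}

/-- The DCH-procedure: step `n` returns, for each player and each level `k`, the set of
surviving strategies `Λⁿ_{θ_{ik}}`. -/
def LambdaD {A B : Type*} (G : MSGame A B) (v1 v2 : List (A × B) → ℝ) (f : ℕ → ℝ) :
    ℕ → (ℕ → Set (Strat1 G)) × (ℕ → Set (Strat2 G))
  | 0 => (fun _ => Set.univ, fun _ => Set.univ)
  | n + 1 =>
      let P := LambdaD G v1 v2 f n
      (fun k =>
        if k = n + 1 then
          {s | ∃ μ : CPS2 G, memDeltaD2 G f (n + 1) μ ∧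
            (∀ hr : G.feasible [] ∧ ¬G.terminal [],
              (∀ x : ℕ × Strat2 G, μ.p ⟨[], hr⟩ x ≠ 0 ↔ x.1 ≤ n ∧ x.2 ∈ P.2 x.1) ∧
              (∀ t : ℕ, t ≤ n → ∀ s2 s2' : Strat2 G, s2 ∈ P.2 t → s2' ∈ P.2 t →
                μ.p ⟨[], hr⟩ (t, s2) = μ.p ⟨[], hr⟩ (t, s2'))) ∧
            seqRat1 G v1 (n + 1) μ s}
        else P.1 k,
       fun k =>
        if k = n + 1 then
          {s | ∃ μ : CPS1 G, memDeltaD1 G f (n + 1) μ ∧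
            (∀ hr : G.feasible [] ∧ ¬G.terminal [],
              (∀ x : ℕ × Strat1 G, μ.p ⟨[], hr⟩ x ≠ 0 ↔ x.1 ≤ n ∧ x.2 ∈ P.1 x.1) ∧
              (∀ t : ℕ, t ≤ n → ∀ s1 s1' : Strat1 G, s1 ∈ P.1 t → s1' ∈ P.1 t →
                μ.p ⟨[], hr⟩ (t, s1) = μ.p ⟨[], hr⟩ (t, s1'))) ∧
            seqRat2 G v2 (n + 1) μ s}
        else P.2 k)

/-- `Λⁿ_{θ_{1k}}`. -/
def LambdaDSec1 {A B : Type*} (G : MSGame A B) (v1 v2 : List (A × B) → ℝ) (f : ℕ → ℝ)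
    (n k : ℕ) : Set (Strat1 G) :=
  (LambdaD G v1 v2 f n).1 k

/-- `Λⁿ_{θ_{2k}}`. -/
def LambdaDSec2 {A B : Type*} (G : MSGame A B) (v1 v2 : List (A × B) → ℝ) (f : ℕ → ℝ)
    (n k : ℕ) : Set (Strat2 G) :=
  (LambdaD G v1 v2 f n).2 k

end

section Game

variable {A B : Type*} {G : MSGame A B}

def MSGame.WellFormed.root (hG : G.WellFormed) : G.Hist := ⟨[], trivial, hG.2.2⟩

theorem MSGame.feasible_of_append : ∀ {l h : List (A × B)}, G.feasible (l ++ h) → G.feasible h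
  | [], _, hf => hf
  | _ :: _, _, hf => feasible_of_append hf.1

theorem List.eq_of_append_cons_eq_append_cons {α : Type*} {l l' t : List α} {a b : α}
    (h : l ++ a :: t = l' ++ b :: t) : a = b := by
  rw [← List.singleton_append, ← List.append_assoc, ← List.singleton_append (l := t),
    ← List.append_assoc] at h
  exact (List.concat_inj.1 (by simpa using List.append_cancel_right h)).2

theorem MSGame.WellFormed.finite_hist (hG : G.WellFormed) : Finite G.Hist :=
  (hG.2.1.subset fun _ hh => hh.1).to_subtype

theorem MSGame.WellFormed.feas1_nonempty (hG : G.WellFormed) (h : G.Hist) :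
    (G.feas1 h.1).Nonempty :=
  Finset.nonempty_iff_ne_empty.2 fun he => h.2.2 ⟨he, (hG.1 _).1 he⟩

theorem MSGame.WellFormed.feas2_nonempty (hG : G.WellFormed) (h : G.Hist) :
    (G.feas2 h.1).Nonempty :=
  Finset.nonempty_iff_ne_empty.2 fun he => h.2.2 ⟨(hG.1 _).2 he, he⟩

theorem MSGame.WellFormed.finite_strat1 (hG : G.WellFormed) : Finite (Strat1 G) := by
  have := hG.finite_hist
  refine Finite.of_injective (fun s : Strat1 G => fun h => (⟨s.act h, s.mem h⟩ : G.feas1 h.1))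
    fun s s' e => ?_
  cases s; cases s'
  congr
  funext h
  exact congrArg Subtype.val (congrFun e h)

theorem MSGame.WellFormed.finite_strat2 (hG : G.WellFormed) : Finite (Strat2 G) := by
  have := hG.finite_hist
  refine Finite.of_injective (fun s : Strat2 G => fun h => (⟨s.act h, s.mem h⟩ : G.feas2 h.1))
    fun s s' e => ?_
  cases s; cases s'
  congr
  funext h
  exact congrArg Subtype.val (congrFun e h)

theorem consistent1_nil (s : Strat1 G) : consistent1 G s [] :=
  fun _ _ _ hl => by simp at hl

theorem consistent2_nil (s : Strat2 G) : consistent2 G s [] :=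
  fun _ _ _ hl => by simp at hl

theorem consistent1.of_suffix {s : Strat1 G} {h₁ h₂ : List (A × B)} (hs : consistent1 G s h₂)
    (hsuf : h₁ <:+ h₂) : consistent1 G s h₁ := by
  obtain ⟨t, rfl⟩ := hsuf
  exact fun h' p l hl => hs h' p (t ++ l) (by rw [hl, List.append_assoc])

theorem consistent2.of_suffix {s : Strat2 G} {h₁ h₂ : List (A × B)} (hs : consistent2 G s h₂)
    (hsuf : h₁ <:+ h₂) : consistent2 G s h₁ := by
  obtain ⟨t, rfl⟩ := hsuf
  exact fun h' p l hl => hs h' p (t ++ l) (by rw [hl, List.append_assoc])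

theorem exists_consistent1 (hG : G.WellFormed) {h : List (A × B)} (hf : G.feasible h) :
    ∃ s : Strat1 G, consistent1 G s h := by
  have : ∀ h' : G.Hist, ∃ a ∈ G.feas1 h'.1, ∀ p l, h = l ++ p :: h'.1 → a = p.1 := by
    intro h'
    by_cases hx : ∃ p l, h = l ++ p :: h'.1
    · obtain ⟨p, l, rfl⟩ := hx
      exact ⟨p.1, (MSGame.feasible_of_append hf).2.2.1,
        fun q l' e => congrArg Prod.fst (List.eq_of_append_cons_eq_append_cons e)⟩
    · obtain ⟨a, ha⟩ := hG.feas1_nonempty h'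
      exact ⟨a, ha, fun p l e => (hx ⟨p, l, e⟩).elim⟩
  choose act hmem hcons using this
  exact ⟨⟨act, hmem⟩, hcons⟩

theorem exists_consistent2 (hG : G.WellFormed) {h : List (A × B)} (hf : G.feasible h) :
    ∃ s : Strat2 G, consistent2 G s h := by
  have : ∀ h' : G.Hist, ∃ b ∈ G.feas2 h'.1, ∀ p l, h = l ++ p :: h'.1 → b = p.2 := by
    intro h'
    by_cases hx : ∃ p l, h = l ++ p :: h'.1
    · obtain ⟨p, l, rfl⟩ := hx
      exact ⟨p.2, (MSGame.feasible_of_append hf).2.2.2,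
        fun q l' e => congrArg Prod.snd (List.eq_of_append_cons_eq_append_cons e)⟩
    · obtain ⟨b, hb⟩ := hG.feas2_nonempty h'
      exact ⟨b, hb, fun p l e => (hx ⟨p, l, e⟩).elim⟩
  choose act hmem hcons using this
  exact ⟨⟨act, hmem⟩, hcons⟩

end Game

theorem tsum_indicator_eq_one_iff {ι : Type*} {p : ι → ℝ} (hp : HasSum p 1) (hnn : ∀ x, 0 ≤ p x)
    {Q : Set ι} : ∑' x, Q.indicator p x = 1 ↔ ∀ x, p x ≠ 0 → x ∈ Q := by
  refine ⟨fun h x hx => ?_, fun h => ?_⟩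
  · have hcompl : HasSum (Qᶜ.indicator p) 0 := by
      rw [Set.indicator_compl, ← sub_self (1 : ℝ)]
      exact hp.sub (h ▸ (hp.summable.indicator Q).hasSum)
    by_contra hxQ
    have := congrFun ((hasSum_zero_iff_of_nonneg (Set.indicator_nonneg fun y _ => hnn y)).1
      hcompl) x
    exact hx (by rwa [Set.indicator_of_mem hxQ] at this)
  · rw [Set.indicator_eq_self.2 (Function.support_subset_iff.2 h), hp.tsum_eq]

theorem fnorm_pos {f : ℕ → ℝ} (hf : ∀ n, 0 < f n) {k : ℕ} (hk : k ≠ 0) (t : ℕ) :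
    0 < fnorm f k t :=
  div_pos (hf t) (Finset.sum_pos (fun i _ => hf i) (Finset.nonempty_range_iff.2 hk))

theorem iInter_eq_of_forall_subset {α ι : Type*} {F : ι → Set α} {k : ι} (h : ∀ n, F k ⊆ F n) :
    ⋂ n, F n = F k :=
  (Set.iInter_subset F k).antisymm (Set.subset_iInter h)

/-- `CPS2 G` and `CPS1 G` are the cases `cons = consistent2 G` and `cons = consistent1 G`. -/
structure CondProbSystem {A B : Type*} (G : MSGame A B) (S : Type*)
    (cons : S → List (A × B) → Prop) where
  p : G.Hist → ℕ × S → ℝ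
  nonneg : ∀ h x, 0 ≤ p h x
  supp : ∀ h x, p h x ≠ 0 → cons x.2 h.1
  hasSum_one : ∀ h, HasSum (p h) 1
  chain : ∀ h' h'' : G.Hist, h'.1 <:+ h''.1 → h'.1 ≠ h''.1 →
    ∀ x : ℕ × S, cons x.2 h''.1 →
      p h' x = p h'' x * ∑' y : ℕ × S, (if cons y.2 h''.1 then p h' y else 0)

namespace CondProbSystem

variable {A B : Type*} {G : MSGame A B} {S : Type*} {cons : S → List (A × B) → Prop}
  (μ : CondProbSystem G S cons)

noncomputable def marg (h : G.Hist) (t : ℕ) : ℝ := ∑' s, μ.p h (t, s)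

def InDelta (f : ℕ → ℝ) (k : ℕ) : Prop :=
  k ≠ 0 →
    ((∀ (h : G.Hist) (t : ℕ), k ≤ t → μ.marg h t = 0) ∧
     (∀ h : G.Hist, 0 < μ.marg h 0 →
        ∀ s : S, cons s h.1 →
          μ.p h (0, s) / μ.marg h 0 = 1 / (({s' : S | cons s' h.1}).ncard : ℝ)) ∧
     (∀ hr : G.feasible [] ∧ ¬G.terminal [],
        ∀ t : ℕ, t < k → μ.marg ⟨[], hr⟩ t = fnorm f k t))

theorem p_eq_zero_of_marg_eq_zero {h : G.Hist} {t : ℕ} (hm : μ.marg h t = 0) (s : S) :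
    μ.p h (t, s) = 0 := by
  have hs : HasSum (fun s => μ.p h (t, s)) 0 :=
    hm ▸ ((μ.hasSum_one h).summable.comp_injective (Prod.mk_right_injective t)).hasSum
  exact congrFun ((hasSum_zero_iff_of_nonneg fun s => μ.nonneg h (t, s)).1 hs) s

variable {μ} {f : ℕ → ℝ} {k : ℕ}

theorem fst_lt (hD : μ.InDelta f k) (hk : k ≠ 0) {h : G.Hist} {x : ℕ × S} (hx : μ.p h x ≠ 0) :
    x.1 < k :=
  not_le.1 fun hkx => hx (μ.p_eq_zero_of_marg_eq_zero ((hD hk).1 h x.1 hkx) x.2)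

theorem marg_root_pos (hG : G.WellFormed) (hf : ∀ n, 0 < f n) (hD : μ.InDelta f k)
    (hk : k ≠ 0) {t : ℕ} (ht : t < k) :
    0 < μ.marg hG.root t :=
  (fnorm_pos hf hk t).trans_eq ((hD hk).2.2 _ t ht).symm

theorem p_zero_eq (hD : μ.InDelta f k) (hk : k ≠ 0) {h : G.Hist} (hm : 0 < μ.marg h 0)
    {s s' : S} (hs : cons s h.1) (hs' : cons s' h.1) : μ.p h (0, s) = μ.p h (0, s') :=
  (div_left_inj' hm.ne').1 (((hD hk).2.1 h hm s hs).trans ((hD hk).2.1 h hm s' hs').symm)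

/-- DK2 spreads the positive root mass `f^k(0)` of the level-0 type over all of `S`. -/
theorem root_pos (hG : G.WellFormed) (hf : ∀ n, 0 < f n) (hD : μ.InDelta f k) (hk : k ≠ 0)
    (hnil : ∀ s, cons s []) (s : S) :
    0 < μ.p hG.root (0, s) := by
  have hm := marg_root_pos hG hf hD hk (Nat.pos_of_ne_zero hk)
  obtain ⟨s₀, hs₀⟩ : ∃ s₀, μ.p hG.root (0, s₀) ≠ 0 := by
    by_contra! h0
    simp [marg, h0] at hm
  rw [p_zero_eq hD hk hm (hnil s) (hnil s₀)]
  exact (μ.nonneg _ _).lt_of_ne' hs₀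

theorem p_ne_zero_of_suffix {h' h : G.Hist} (hsuf : h'.1 <:+ h.1)
    (hC : 0 < ∑' y : ℕ × S, (if cons y.2 h.1 then μ.p h' y else 0)) {x : ℕ × S}
    (hx : μ.p h x ≠ 0) : μ.p h' x ≠ 0 := by
  by_cases he : h'.1 = h.1
  · rwa [Subtype.ext he]
  · rw [μ.chain h' h hsuf he x (μ.supp h x hx)]
    exact mul_ne_zero hx hC.ne'

theorem mass_pos {h' h : G.Hist} {t : ℕ} {s : S} (hpos : 0 < μ.p h' (t, s)) (hs : cons s h.1) :
    0 < ∑' y : ℕ × S, (if cons y.2 h.1 then μ.p h' y else 0) := by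
  have hnn : ∀ y : ℕ × S, 0 ≤ if cons y.2 h.1 then μ.p h' y else 0 := fun y => by
    split_ifs
    exacts [μ.nonneg _ _, le_rfl]
  have hsum : Summable fun y : ℕ × S => if cons y.2 h.1 then μ.p h' y else 0 :=
    (μ.hasSum_one h').summable.of_nonneg_of_le hnn fun y => by
      split_ifs
      exacts [le_rfl, μ.nonneg _ _]
  exact hpos.trans_le ((if_pos hs).symm.le.trans (hsum.le_tsum (t, s) fun y _ => hnn y))

/-- Every history has positive prior probability, so the chain rule confines each conditional
belief to the support of the root belief. -/
theorem tsum_indicator_eq_one_of_root (hG : G.WellFormed) (hf : ∀ n, 0 < f n)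
    (hD : μ.InDelta f k) (hk : k ≠ 0) (hnil : ∀ s, cons s []) (hex : ∀ h : G.Hist, ∃ s, cons s h.1)
    {Q : Set (ℕ × S)} (hQ : ∀ x, μ.p hG.root x ≠ 0 → x ∈ Q) (h : G.Hist) :
    ∑' y, Q.indicator (μ.p h) y = 1 := by
  obtain ⟨s, hs⟩ := hex h
  refine (tsum_indicator_eq_one_iff (μ.hasSum_one h) (μ.nonneg h)).2 fun x hx => hQ x ?_
  exact p_ne_zero_of_suffix List.nil_suffix (mass_pos (root_pos hG hf hD hk hnil s) hs) hx

/-- When the opponent's non-zero levels are singletons, the DCH requirements on the root belief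
(full support on the listed types, uniform within each level) reduce to a support condition:
positivity comes from `f^k`, uniformity from DK2 at level 0 and is trivial elsewhere. -/
theorem dch_root_iff (hG : G.WellFormed) (hf : ∀ n, 0 < f n) {m : ℕ} (hD : μ.InDelta f (m + 1))
    (hnil : ∀ s, cons s []) {L : ℕ → Set S} (hL : ∀ t, 0 < t → t ≤ m → ∃ σ, L t = {σ}) :
    ((∀ x, μ.p hG.root x ≠ 0 ↔ x.1 ≤ m ∧ x.2 ∈ L x.1) ∧
      ∀ t, t ≤ m → ∀ s s', s ∈ L t → s' ∈ L t → μ.p hG.root (t, s) = μ.p hG.root (t, s')) ↔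
    ∀ x, μ.p hG.root x ≠ 0 → x.2 ∈ L x.1 := by
  have hk := m.succ_ne_zero
  refine ⟨fun h x hx => ((h.1 x).1 hx).2, fun hsub => ⟨fun x => ?_, fun t ht s s' hs hs' => ?_⟩⟩
  · refine ⟨fun hx => ⟨Nat.lt_succ_iff.1 (fst_lt hD hk hx), hsub x hx⟩, ?_⟩
    obtain ⟨t, s⟩ := x
    rintro ⟨ht, hs⟩
    rcases Nat.eq_zero_or_pos t with rfl | htpos
    · exact (root_pos hG hf hD hk hnil s).ne'
    obtain ⟨σ, hσ⟩ := hL t htpos ht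
    have hm := marg_root_pos hG hf hD hk (Nat.lt_succ_of_le ht)
    rw [marg, tsum_eq_single s fun s' hs' => by_contra fun h0 => hs' ?_] at hm
    · exact hm.ne'
    · have h₁ : s' ∈ L t := hsub (t, s') h0
      rw [hσ] at hs h₁
      exact h₁.trans hs.symm
  · rcases Nat.eq_zero_or_pos t with rfl | htpos
    · exact p_zero_eq hD hk (marg_root_pos hG hf hD hk (Nat.succ_pos m)) (hnil s) (hnil s')
    · obtain ⟨σ, hσ⟩ := hL t htpos ht
      rw [hσ] at hs hs'
      rw [hs, hs']

end CondProbSystem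

section Uniform

variable {A B : Type*} {S : Type*} (cons : S → List (A × B) → Prop)

noncomputable def uniformP (h : List (A × B)) (x : ℕ × S) : ℝ :=
  if x.1 = 0 ∧ cons x.2 h then (({s | cons s h}.ncard : ℝ))⁻¹ else 0

variable {cons}

theorem uniformP_nonneg (h : List (A × B)) (x : ℕ × S) : 0 ≤ uniformP cons h x := by
  unfold uniformP
  split_ifs
  exacts [by positivity, le_rfl]

theorem fst_eq_zero_of_uniformP_ne_zero {h : List (A × B)} {x : ℕ × S}
    (hx : uniformP cons h x ≠ 0) : x.1 = 0 ∧ cons x.2 h := by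
  by_contra hc
  exact hx (if_neg hc)

theorem ncard_ne_zero_of_exists [Finite S] {h : List (A × B)} (hne : ∃ s, cons s h) :
    ({s | cons s h}.ncard : ℝ) ≠ 0 :=
  Nat.cast_ne_zero.2 ((Set.ncard_pos (Set.toFinite _)).2 hne).ne'

theorem hasSum_uniformP [Finite S] {h : List (A × B)} (hne : ∃ s, cons s h) :
    HasSum (uniformP cons h) 1 := by
  have := Fintype.ofFinite S
  refine ((Prod.mk_right_injective 0).hasSum_iff (f := uniformP cons h)
    fun x hx => if_neg fun h0 => hx ⟨x.2, Prod.ext h0.1.symm rfl⟩).1 ?_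
  convert hasSum_fintype _
  have hcard : ({s | cons s h}.ncard : ℝ) = (Finset.univ.filter fun s => cons s h).card := by
    rw [Set.ncard_eq_toFinset_card', Set.toFinset_ofPred]
  simp only [Function.comp_apply, uniformP, true_and]
  rw [Finset.sum_ite, Finset.sum_const_zero, add_zero, Finset.sum_const, nsmul_eq_mul, ← hcard,
    mul_inv_cancel₀ (ncard_ne_zero_of_exists hne)]

theorem uniformP_chain [Finite S] (hmono : ∀ s h₁ h₂, h₁ <:+ h₂ → cons s h₂ → cons s h₁)
    {h' h'' : List (A × B)} (hsuf : h' <:+ h'') (hne : ∃ s, cons s h'') (x : ℕ × S)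
    (hx : cons x.2 h'') :
    uniformP cons h' x = uniformP cons h'' x *
      ∑' y : ℕ × S, (if cons y.2 h'' then uniformP cons h' y else 0) := by
  have hN := ncard_ne_zero_of_exists hne
  -- conditioning the uniform belief at `h'` on `S(h'')` gives the uniform belief at `h''`
  have hcond : ∀ y : ℕ × S, (if cons y.2 h'' then uniformP cons h' y else 0) =
      ({s | cons s h''}.ncard : ℝ) * ({s | cons s h'}.ncard : ℝ)⁻¹ * uniformP cons h'' y := by
    intro y
    by_cases hy : y.1 = 0 ∧ cons y.2 h''
    · rw [if_pos hy.2, uniformP, uniformP, if_pos ⟨hy.1, hmono _ _ _ hsuf hy.2⟩, if_pos hy]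
      field_simp
    · simp only [uniformP, if_neg hy, mul_zero]
      split_ifs with hy' hy1
      · exact absurd ⟨hy1.1, hy'⟩ hy
      all_goals rfl
  rw [tsum_congr hcond, tsum_mul_left, (hasSum_uniformP hne).tsum_eq, mul_one]
  by_cases hx1 : x.1 = 0
  · rw [uniformP, uniformP, if_pos ⟨hx1, hmono _ _ _ hsuf hx⟩, if_pos ⟨hx1, hx⟩]
    field_simp
  · simp [uniformP, hx1]

theorem tsum_indicator_uniformP [Finite S] {h : List (A × B)} (hne : ∃ s, cons s h)
    {Q : Set (ℕ × S)} (hQ : ∀ s, ((0 : ℕ), s) ∈ Q) :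
    ∑' y, Q.indicator (uniformP cons h) y = 1 :=
  (tsum_indicator_eq_one_iff (hasSum_uniformP hne) (uniformP_nonneg h)).2 fun x hx =>
    (Prod.ext (fst_eq_zero_of_uniformP_ne_zero hx).1 rfl : x = (0, x.2)) ▸ hQ x.2

variable {G : MSGame A B}

noncomputable def CondProbSystem.uniform [Finite S]
    (hmono : ∀ s h₁ h₂, h₁ <:+ h₂ → cons s h₂ → cons s h₁)
    (hex : ∀ h : G.Hist, ∃ s, cons s h.1) : CondProbSystem G S cons where
  p h := uniformP cons h.1
  nonneg h := uniformP_nonneg h.1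
  supp _ _ hx := (fst_eq_zero_of_uniformP_ne_zero hx).2
  hasSum_one h := hasSum_uniformP (hex h)
  chain _ h'' hsuf _ := uniformP_chain hmono hsuf (hex h'')

end Uniform

section Players

variable {A B : Type*} {G : MSGame A B} {v1 v2 : List (A × B) → ℝ} {f : ℕ → ℝ}

def CPS1.toCondProbSystem (μ : CPS1 G) : CondProbSystem G (Strat1 G) (consistent1 G) :=
  ⟨μ.p, μ.nonneg, μ.supp, μ.hasSum_one, μ.chain⟩

def CPS2.toCondProbSystem (μ : CPS2 G) : CondProbSystem G (Strat2 G) (consistent2 G) :=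
  ⟨μ.p, μ.nonneg, μ.supp, μ.hasSum_one, μ.chain⟩

theorem memDeltaD1.toInDelta {k : ℕ} {μ : CPS1 G} (hD : memDeltaD1 G f k μ) :
    μ.toCondProbSystem.InDelta f k :=
  hD

theorem memDeltaD2.toInDelta {k : ℕ} {μ : CPS2 G} (hD : memDeltaD2 G f k μ) :
    μ.toCondProbSystem.InDelta f k :=
  hD

noncomputable def CPS1.uniform (hG : G.WellFormed) : CPS1 G :=
  haveI := hG.finite_strat1
  let ν : CondProbSystem G (Strat1 G) (consistent1 G) :=
    .uniform (fun _ _ _ hsuf hs => hs.of_suffix hsuf) fun h => exists_consistent1 hG h.2.1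
  ⟨ν.p, ν.nonneg, ν.supp, ν.hasSum_one, ν.chain⟩

noncomputable def CPS2.uniform (hG : G.WellFormed) : CPS2 G :=
  haveI := hG.finite_strat2
  let ν : CondProbSystem G (Strat2 G) (consistent2 G) :=
    .uniform (fun _ _ _ hsuf hs => hs.of_suffix hsuf) fun h => exists_consistent2 hG h.2.1
  ⟨ν.p, ν.nonneg, ν.supp, ν.hasSum_one, ν.chain⟩

theorem seqRat1_zero (μ : CPS2 G) (s : Strat1 G) : seqRat1 G v1 0 μ s :=
  fun _ _ _ _ => by simp [expU1, payU1]

theorem seqRat2_zero (μ : CPS1 G) (s : Strat2 G) : seqRat2 G v2 0 μ s :=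
  fun _ _ _ _ => by simp [expU2, payU2]

theorem SigmaD_fst_antitone : Antitone fun n => (SigmaD G v1 v2 f n).1 :=
  antitone_nat_of_succ_le fun _ _ hx => hx.1

theorem SigmaD_snd_antitone : Antitone fun n => (SigmaD G v1 v2 f n).2 :=
  antitone_nat_of_succ_le fun _ _ hx => hx.1

theorem zero_mem_SigmaD (hG : G.WellFormed) (n : ℕ) :
    (∀ s, ((0 : ℕ), s) ∈ (SigmaD G v1 v2 f n).1) ∧ ∀ s, ((0 : ℕ), s) ∈ (SigmaD G v1 v2 f n).2 := by
  induction n with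
  | zero => exact ⟨fun _ => trivial, fun _ => trivial⟩
  | succ n ih =>
    have := hG.finite_strat1
    have := hG.finite_strat2
    exact ⟨fun s => ⟨ih.1 s, CPS2.uniform hG, fun h0 => (h0 rfl).elim,
        fun h _ => tsum_indicator_uniformP (exists_consistent2 hG h.2.1) ih.2, seqRat1_zero _ s⟩,
      fun s => ⟨ih.2 s, CPS1.uniform hG, fun h0 => (h0 rfl).elim,
        fun h _ => tsum_indicator_uniformP (exists_consistent1 hG h.2.1) ih.1, seqRat2_zero _ s⟩⟩

theorem root_support_of_mem_SigmaDSec1 (hG : G.WellFormed) {m : ℕ} {s : Strat1 G}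
    (hs : s ∈ SigmaDSec1 G v1 v2 f (m + 1) (m + 1)) :
    ∃ μ : CPS2 G, memDeltaD2 G f (m + 1) μ ∧
      (∀ x, μ.p hG.root x ≠ 0 → x ∈ (SigmaD G v1 v2 f m).2) ∧ seqRat1 G v1 (m + 1) μ s := by
  obtain ⟨-, μ, hD, hbel, hrat⟩ := hs
  obtain ⟨s₀, hs₀⟩ := exists_consistent2 hG (h := []) trivial
  exact ⟨μ, hD, (tsum_indicator_eq_one_iff (μ.hasSum_one _) (μ.nonneg _)).1
    (hbel hG.root ⟨(0, s₀), (zero_mem_SigmaD hG m).2 s₀, hs₀⟩), hrat⟩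

theorem root_support_of_mem_SigmaDSec2 (hG : G.WellFormed) {m : ℕ} {s : Strat2 G}
    (hs : s ∈ SigmaDSec2 G v1 v2 f (m + 1) (m + 1)) :
    ∃ μ : CPS1 G, memDeltaD1 G f (m + 1) μ ∧
      (∀ x, μ.p hG.root x ≠ 0 → x ∈ (SigmaD G v1 v2 f m).1) ∧ seqRat2 G v2 (m + 1) μ s := by
  obtain ⟨-, μ, hD, hbel, hrat⟩ := hs
  obtain ⟨s₀, hs₀⟩ := exists_consistent1 hG (h := []) trivial
  exact ⟨μ, hD, (tsum_indicator_eq_one_iff (μ.hasSum_one _) (μ.nonneg _)).1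
    (hbel hG.root ⟨(0, s₀), (zero_mem_SigmaD hG m).1 s₀, hs₀⟩), hrat⟩

theorem mem_SigmaDSec1_of_root_support (hG : G.WellFormed) (hf : ∀ n, 0 < f n) {m : ℕ}
    (hpers : ∀ t ≤ m, ∀ n, SigmaDSec2 G v1 v2 f t t ⊆ SigmaDSec2 G v1 v2 f n t)
    {s : Strat1 G} {μ : CPS2 G} (hD : memDeltaD2 G f (m + 1) μ)
    (hroot : ∀ x, μ.p hG.root x ≠ 0 → x ∈ (SigmaD G v1 v2 f m).2)
    (hrat : seqRat1 G v1 (m + 1) μ s) (n : ℕ) : s ∈ SigmaDSec1 G v1 v2 f n (m + 1) := by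
  have hroot' : ∀ x, μ.p hG.root x ≠ 0 → ∀ n, x ∈ (SigmaD G v1 v2 f n).2 := fun x hx n =>
    have hx1 := Nat.lt_succ_iff.1 (CondProbSystem.fst_lt hD.toInDelta m.succ_ne_zero hx)
    hpers x.1 hx1 n (SigmaD_snd_antitone hx1 (hroot x hx))
  induction n with
  | zero => trivial
  | succ n ih =>
    exact ⟨ih, μ, hD, fun h _ => CondProbSystem.tsum_indicator_eq_one_of_root hG hf hD.toInDelta
      m.succ_ne_zero consistent2_nil (fun h => exists_consistent2 hG h.2.1)
      (fun x hx => hroot' x hx n) h, hrat⟩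

theorem mem_SigmaDSec2_of_root_support (hG : G.WellFormed) (hf : ∀ n, 0 < f n) {m : ℕ}
    (hpers : ∀ t ≤ m, ∀ n, SigmaDSec1 G v1 v2 f t t ⊆ SigmaDSec1 G v1 v2 f n t)
    {s : Strat2 G} {μ : CPS1 G} (hD : memDeltaD1 G f (m + 1) μ)
    (hroot : ∀ x, μ.p hG.root x ≠ 0 → x ∈ (SigmaD G v1 v2 f m).1)
    (hrat : seqRat2 G v2 (m + 1) μ s) (n : ℕ) : s ∈ SigmaDSec2 G v1 v2 f n (m + 1) := by
  have hroot' : ∀ x, μ.p hG.root x ≠ 0 → ∀ n, x ∈ (SigmaD G v1 v2 f n).1 := fun x hx n =>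
    have hx1 := Nat.lt_succ_iff.1 (CondProbSystem.fst_lt hD.toInDelta m.succ_ne_zero hx)
    hpers x.1 hx1 n (SigmaD_fst_antitone hx1 (hroot x hx))
  induction n with
  | zero => trivial
  | succ n ih =>
    exact ⟨ih, μ, hD, fun h _ => CondProbSystem.tsum_indicator_eq_one_of_root hG hf hD.toInDelta
      m.succ_ne_zero consistent1_nil (fun h => exists_consistent1 hG h.2.1)
      (fun x hx => hroot' x hx n) h, hrat⟩

/-- `Σᵏ_{θ_{ik}} = Σ^∞_{θ_{ik}}`. -/
theorem SigmaDSec_subset (hG : G.WellFormed) (hf : ∀ n, 0 < f n) (k n : ℕ) :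
    SigmaDSec1 G v1 v2 f k k ⊆ SigmaDSec1 G v1 v2 f n k ∧
      SigmaDSec2 G v1 v2 f k k ⊆ SigmaDSec2 G v1 v2 f n k := by
  induction k using Nat.strong_induction_on generalizing n with
  | _ k ih =>
  cases k with
  | zero => exact ⟨fun s _ => (zero_mem_SigmaD hG n).1 s, fun s _ => (zero_mem_SigmaD hG n).2 s⟩
  | succ m =>
    constructor
    · intro s hs
      obtain ⟨μ, hD, hroot, hrat⟩ := root_support_of_mem_SigmaDSec1 hG hs
      exact mem_SigmaDSec1_of_root_support hG hf (fun t ht n => (ih t (Nat.lt_succ_of_le ht) n).2)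
        hD hroot hrat n
    · intro s hs
      obtain ⟨μ, hD, hroot, hrat⟩ := root_support_of_mem_SigmaDSec2 hG hs
      exact mem_SigmaDSec2_of_root_support hG hf (fun t ht n => (ih t (Nat.lt_succ_of_le ht) n).1)
        hD hroot hrat n

theorem SigmaDSec_eq_of_le (hG : G.WellFormed) (hf : ∀ n, 0 < f n) {t n : ℕ} (ht : t ≤ n) :
    SigmaDSec1 G v1 v2 f n t = SigmaDSec1 G v1 v2 f t t ∧
      SigmaDSec2 G v1 v2 f n t = SigmaDSec2 G v1 v2 f t t :=
  ⟨Set.Subset.antisymm (fun _ hs => SigmaD_fst_antitone ht hs) (SigmaDSec_subset hG hf t n).1,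
    Set.Subset.antisymm (fun _ hs => SigmaD_snd_antitone ht hs) (SigmaDSec_subset hG hf t n).2⟩

theorem mem_SigmaDSec1_succ_iff (hG : G.WellFormed) (hf : ∀ n, 0 < f n) {m : ℕ} {s : Strat1 G} :
    s ∈ SigmaDSec1 G v1 v2 f (m + 1) (m + 1) ↔
      ∃ μ : CPS2 G, memDeltaD2 G f (m + 1) μ ∧
        (∀ x, μ.p hG.root x ≠ 0 → x ∈ (SigmaD G v1 v2 f m).2) ∧ seqRat1 G v1 (m + 1) μ s :=
  ⟨root_support_of_mem_SigmaDSec1 hG, fun ⟨_, hD, hroot, hrat⟩ =>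
    mem_SigmaDSec1_of_root_support hG hf (fun t _ n => (SigmaDSec_subset hG hf t n).2)
      hD hroot hrat (m + 1)⟩

theorem mem_SigmaDSec2_succ_iff (hG : G.WellFormed) (hf : ∀ n, 0 < f n) {m : ℕ} {s : Strat2 G} :
    s ∈ SigmaDSec2 G v1 v2 f (m + 1) (m + 1) ↔
      ∃ μ : CPS1 G, memDeltaD1 G f (m + 1) μ ∧
        (∀ x, μ.p hG.root x ≠ 0 → x ∈ (SigmaD G v1 v2 f m).1) ∧ seqRat2 G v2 (m + 1) μ s :=
  ⟨root_support_of_mem_SigmaDSec2 hG, fun ⟨_, hD, hroot, hrat⟩ =>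
    mem_SigmaDSec2_of_root_support hG hf (fun t _ n => (SigmaDSec_subset hG hf t n).1)
      hD hroot hrat (m + 1)⟩

theorem LambdaDSec_succ_of_ne {n k : ℕ} (hk : k ≠ n + 1) :
    LambdaDSec1 G v1 v2 f (n + 1) k = LambdaDSec1 G v1 v2 f n k ∧
      LambdaDSec2 G v1 v2 f (n + 1) k = LambdaDSec2 G v1 v2 f n k := by
  simp only [LambdaDSec1, LambdaDSec2, LambdaD, if_neg hk, and_self]

theorem LambdaDSec_eq_of_le {k n : ℕ} (hkn : k ≤ n) :
    LambdaDSec1 G v1 v2 f n k = LambdaDSec1 G v1 v2 f k k ∧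
      LambdaDSec2 G v1 v2 f n k = LambdaDSec2 G v1 v2 f k k := by
  induction n, hkn using Nat.le_induction with
  | base => exact ⟨rfl, rfl⟩
  | succ n hkn ih =>
    rw [(LambdaDSec_succ_of_ne (by omega)).1, (LambdaDSec_succ_of_ne (by omega)).2]
    exact ih

theorem LambdaDSec_eq_univ_of_lt {k n : ℕ} (hnk : n < k) :
    LambdaDSec1 G v1 v2 f n k = Set.univ ∧ LambdaDSec2 G v1 v2 f n k = Set.univ := by
  induction n with
  | zero => exact ⟨rfl, rfl⟩
  | succ n ih =>
    rw [(LambdaDSec_succ_of_ne (by omega)).1, (LambdaDSec_succ_of_ne (by omega)).2]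
    exact ih (by omega)

theorem LambdaDSec_subset (k n : ℕ) :
    LambdaDSec1 G v1 v2 f k k ⊆ LambdaDSec1 G v1 v2 f n k ∧
      LambdaDSec2 G v1 v2 f k k ⊆ LambdaDSec2 G v1 v2 f n k := by
  rcases lt_or_ge n k with h | h
  · rw [(LambdaDSec_eq_univ_of_lt h).1, (LambdaDSec_eq_univ_of_lt h).2]
    exact ⟨Set.subset_univ _, Set.subset_univ _⟩
  · rw [(LambdaDSec_eq_of_le h).1, (LambdaDSec_eq_of_le h).2]
    exact ⟨subset_rfl, subset_rfl⟩

theorem LambdaDSec1_succ_eq (hG : G.WellFormed) (hf : ∀ n, 0 < f n) {m : ℕ}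
    (hLS : ∀ t ≤ m, LambdaDSec2 G v1 v2 f m t = SigmaDSec2 G v1 v2 f m t)
    (hgen : ∀ t, 0 < t → t ≤ m → ∃ σ, SigmaDSec2 G v1 v2 f m t = {σ}) :
    LambdaDSec1 G v1 v2 f (m + 1) (m + 1) = SigmaDSec1 G v1 v2 f (m + 1) (m + 1) := by
  ext s
  rw [mem_SigmaDSec1_succ_iff hG hf]
  simp only [LambdaDSec1, LambdaD]
  refine exists_congr fun μ => and_congr_right fun hD => and_congr_left fun _ => ?_
  refine (forall_prop_of_true hG.root.2).trans ((CondProbSystem.dch_root_iff hG hf hD.toInDelta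
    consistent2_nil fun t ht htm => ?_).trans (forall_congr' fun x => forall_congr' fun hx => ?_))
  · change ∃ σ, LambdaDSec2 G v1 v2 f m t = {σ}
    rw [hLS t htm]
    exact hgen t ht htm
  · change x.2 ∈ LambdaDSec2 G v1 v2 f m x.1 ↔ x.2 ∈ SigmaDSec2 G v1 v2 f m x.1
    rw [hLS x.1 (Nat.lt_succ_iff.1 (CondProbSystem.fst_lt hD.toInDelta m.succ_ne_zero hx))]

theorem LambdaDSec2_succ_eq (hG : G.WellFormed) (hf : ∀ n, 0 < f n) {m : ℕ}
    (hLS : ∀ t ≤ m, LambdaDSec1 G v1 v2 f m t = SigmaDSec1 G v1 v2 f m t)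
    (hgen : ∀ t, 0 < t → t ≤ m → ∃ σ, SigmaDSec1 G v1 v2 f m t = {σ}) :
    LambdaDSec2 G v1 v2 f (m + 1) (m + 1) = SigmaDSec2 G v1 v2 f (m + 1) (m + 1) := by
  ext s
  rw [mem_SigmaDSec2_succ_iff hG hf]
  simp only [LambdaDSec2, LambdaD]
  refine exists_congr fun μ => and_congr_right fun hD => and_congr_left fun _ => ?_
  refine (forall_prop_of_true hG.root.2).trans ((CondProbSystem.dch_root_iff hG hf hD.toInDelta
    consistent1_nil fun t ht htm => ?_).trans (forall_congr' fun x => forall_congr' fun hx => ?_))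
  · change ∃ σ, LambdaDSec1 G v1 v2 f m t = {σ}
    rw [hLS t htm]
    exact hgen t ht htm
  · change x.2 ∈ LambdaDSec1 G v1 v2 f m x.1 ↔ x.2 ∈ SigmaDSec1 G v1 v2 f m x.1
    rw [hLS x.1 (Nat.lt_succ_iff.1 (CondProbSystem.fst_lt hD.toInDelta m.succ_ne_zero hx))]

theorem LambdaDSec_eq_SigmaDSec (hG : G.WellFormed) (hf : ∀ n, 0 < f n)
    (hgen : ∀ k : ℕ, 1 ≤ k →
      (∃ s : Strat1 G, SigmaDSec1 G v1 v2 f k k = {s}) ∧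
      (∃ s : Strat2 G, SigmaDSec2 G v1 v2 f k k = {s})) (k : ℕ) :
    LambdaDSec1 G v1 v2 f k k = SigmaDSec1 G v1 v2 f k k ∧
      LambdaDSec2 G v1 v2 f k k = SigmaDSec2 G v1 v2 f k k := by
  induction k using Nat.strong_induction_on with
  | _ k ih =>
  cases k with
  | zero => exact ⟨Set.ext fun _ => Iff.rfl, Set.ext fun _ => Iff.rfl⟩
  | succ m =>
    have hLS : ∀ t ≤ m, LambdaDSec1 G v1 v2 f m t = SigmaDSec1 G v1 v2 f m t ∧
        LambdaDSec2 G v1 v2 f m t = SigmaDSec2 G v1 v2 f m t := fun t ht => by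
      rw [(LambdaDSec_eq_of_le ht).1, (LambdaDSec_eq_of_le ht).2,
        (SigmaDSec_eq_of_le hG hf ht).1, (SigmaDSec_eq_of_le hG hf ht).2]
      exact ih t (Nat.lt_succ_of_le ht)
    have hgen' : ∀ t, 0 < t → t ≤ m → (∃ σ, SigmaDSec1 G v1 v2 f m t = {σ}) ∧
        ∃ σ, SigmaDSec2 G v1 v2 f m t = {σ} := fun t ht htm => by
      rw [(SigmaDSec_eq_of_le hG hf htm).1, (SigmaDSec_eq_of_le hG hf htm).2]
      exact hgen t ht
    exact ⟨LambdaDSec1_succ_eq hG hf (fun t ht => (hLS t ht).2) fun t ht htm => (hgen' t ht htm).2,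
      LambdaDSec2_succ_eq hG hf (fun t ht => (hLS t ht).1) fun t ht htm => (hgen' t ht htm).1⟩

end Players

theorem dch_eq_sigmaD_of_generic_general {A B : Type*} (G : MSGame A B) (hG : G.WellFormed)
    (v1 v2 : List (A × B) → ℝ)
    (f : ℕ → ℝ) (hf : ∀ n, 0 < f n)
    (hgen : ∀ k : ℕ, 1 ≤ k →
      (∃ s : Strat1 G, SigmaDSec1 G v1 v2 f k k = {s}) ∧
      (∃ s : Strat2 G, SigmaDSec2 G v1 v2 f k k = {s})) :
    (∀ k : ℕ, LambdaDSec1 G v1 v2 f k k = SigmaDSec1 G v1 v2 f k k) ∧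
    (∀ k : ℕ, LambdaDSec2 G v1 v2 f k k = SigmaDSec2 G v1 v2 f k k) ∧
    (∀ k : ℕ, (⋂ n : ℕ, LambdaDSec1 G v1 v2 f n k) = ⋂ n : ℕ, SigmaDSec1 G v1 v2 f n k) ∧
    (∀ k : ℕ, (⋂ n : ℕ, LambdaDSec2 G v1 v2 f n k) = ⋂ n : ℕ, SigmaDSec2 G v1 v2 f n k) := by
  have hLS := LambdaDSec_eq_SigmaDSec hG hf hgen
  refine ⟨fun k => (hLS k).1, fun k => (hLS k).2, fun k => ?_, fun k => ?_⟩
  · rw [iInter_eq_of_forall_subset fun n => (LambdaDSec_subset k n).1,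
      iInter_eq_of_forall_subset fun n => (SigmaDSec_subset hG hf k n).1, (hLS k).1]
  · rw [iInter_eq_of_forall_subset fun n => (LambdaDSec_subset k n).2,
      iInter_eq_of_forall_subset fun n => (SigmaDSec_subset hG hf k n).2, (hLS k).2]

/-- Theorem 2, part 2: if for every player i and every k ≥ 1 the survivor
set `Σᵏ_{θ_{ik}}` of the dynamic Δ^κ-rationalization procedure is a singleton, then
`Λᵏ_{θ_{ik}} = Σᵏ_{θ_{ik}}` for every i, k, and the DCH solution coincides with dynamic
Δ^κ-rationalizability. -/
theorem dch_eq_sigmaD_of_generic {A B : Type*} (G : MSGame A B) (hG : G.WellFormed)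
    (v1 v2 : List (A × B) → ℝ)
    (f : ℕ → ℝ) (hf : ∀ n, 0 < f n) (hfsum : HasSum f 1)
    (hgen : ∀ k : ℕ, 1 ≤ k →
      (∃ s : Strat1 G, SigmaDSec1 G v1 v2 f k k = {s}) ∧
      (∃ s : Strat2 G, SigmaDSec2 G v1 v2 f k k = {s})) :
    (∀ k : ℕ, LambdaDSec1 G v1 v2 f k k = SigmaDSec1 G v1 v2 f k k) ∧
    (∀ k : ℕ, LambdaDSec2 G v1 v2 f k k = SigmaDSec2 G v1 v2 f k k) ∧
    (∀ k : ℕ, (⋂ n : ℕ, LambdaDSec1 G v1 v2 f n k) = ⋂ n : ℕ, SigmaDSec1 G v1 v2 f n k) ∧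
    (∀ k : ℕ, (⋂ n : ℕ, LambdaDSec2 G v1 v2 f n k) = ⋂ n : ℕ, SigmaDSec2 G v1 v2 f n k) :=
  dch_eq_sigmaD_of_generic_general G hG v1 v2 f hf hgen
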